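/- Let H₁, H₂ be real inner product spaces and let A : H₁×H₂ → ℝ be bilinear. Suppose for every (u,p) ∈ H₁×H₂: (i) A((u,p),(u,p)) = N(u,p)² for a norm-like functional N; (ii) there exists z with A((u,p),(z,0)) ≥ α·S(u,p)² − C₁·N(u,p)² and |||(z,0)||| ≤ c₁·S(u,p); (iii) there exists z̃ with A((u,p),(z̃,0)) ≥ β·P(p)² − C₂·N(u,p)² and |||(z̃,0)||| ≤ c₂·P(p), where |||(v,q)|||² := N(v,q)² + α'·S(v,q)² + β'·P(q)² for suitable positive weights α', β'. Then there exists γ > 0 such that sup over test pairs (v,q) of A((u,p),(v,q))/|||(v,q)||| ≥ γ·|||(u,p)||| for all (u,p). -/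
import Mathlib


lemma infsup_aux (Av T Z c k γ : ℝ) (hT : 0 ≤ T) (hγ : 0 < γ)
    (hZ : Real.sqrt Z ≤ c * T) (hγc : γ * c ≤ k) (hγc' : c * γ ≤ 1)
    (hAv : Av ≥ k * T ^ 2) : Av ≥ γ * T * Real.sqrt Z ∧ Real.sqrt Z ≤ T / γ := by
  constructor
  · nlinarith [mul_le_mul_of_nonneg_left hZ (mul_nonneg hγ.le hT),
      mul_le_mul_of_nonneg_right hγc (sq_nonneg T)]
  · rw [le_div_iff₀ hγ]
    nlinarith [mul_le_mul_of_nonneg_right hZ hγ.le, mul_le_mul_of_nonneg_left hγc' hT]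

lemma sqrt_bound (a b c d : ℝ) (ha : 0 ≤ a) (hb : 0 ≤ b) (hc : 0 ≤ c) (hd : 0 ≤ d)
    (h : a + b + c ≤ d) :
    Real.sqrt (a ^ 2 + 1 * b ^ 2 + 1 * c ^ 2) ≤ d := by
  have h1 : a ^ 2 + 1 * b ^ 2 + 1 * c ^ 2 ≤ d ^ 2 := by nlinarith
  calc Real.sqrt (a ^ 2 + 1 * b ^ 2 + 1 * c ^ 2) ≤ Real.sqrt (d ^ 2) := Real.sqrt_le_sqrt h1
    _ = d := Real.sqrt_sq hd

set_option maxHeartbeats 1600000 in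
/-- Abstract inf-sup combination argument (Theorem 4.4): coercivity in a weak norm plus
two auxiliary test-function lemmas recovering the supg seminorm and the pressure norm
combine into an inf-sup bound in the full triple norm
`|||(v,q)|||² = N(v,q)² + α'·S(v,q)² + β'·P(q)²` for suitable positive weights `α', β'`. -/
theorem abstract_infsup_combination
    {H₁ H₂ : Type*} [NormedAddCommGroup H₁] [InnerProductSpace ℝ H₁]
    [NormedAddCommGroup H₂] [InnerProductSpace ℝ H₂]
    (A : (H₁ × H₂) →ₗ[ℝ] (H₁ × H₂) →ₗ[ℝ] ℝ)
    (N S : H₁ → H₂ → ℝ) (P : H₂ → ℝ)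
    (hN : ∀ u p, 0 ≤ N u p) (hS : ∀ u p, 0 ≤ S u p) (hP : ∀ p, 0 ≤ P p)
    (α β C₁ C₂ c₁ c₂ : ℝ)
    (hα : 0 < α) (hβ : 0 < β) (hC₁ : 0 < C₁) (hC₂ : 0 < C₂) (hc₁ : 0 < c₁) (hc₂ : 0 < c₂)
    -- (i) coercivity in the weak norm
    (hcoer : ∀ u p, A (u, p) (u, p) = (N u p) ^ 2)
    -- (ii) recovery of the supg seminorm S
    (hsupg : ∀ u p, ∃ z : H₁,
      A (u, p) (z, 0) ≥ α * (S u p) ^ 2 - C₁ * (N u p) ^ 2 ∧ N z 0 + S z 0 + P 0 ≤ c₁ * S u p)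
    -- (iii) recovery of the pressure norm P
    (hpres : ∀ u p, ∃ zt : H₁,
      A (u, p) (zt, 0) ≥ β * (P p) ^ 2 - C₂ * (N u p) ^ 2 ∧
        N zt 0 + S zt 0 + P 0 ≤ c₂ * P p) :
    ∃ α' > (0 : ℝ), ∃ β' > (0 : ℝ), ∃ γ > (0 : ℝ), ∀ u : H₁, ∀ p : H₂, ∃ v : H₁, ∃ q : H₂,
      A (u, p) (v, q) ≥
        γ * Real.sqrt ((N u p) ^ 2 + α' * (S u p) ^ 2 + β' * (P p) ^ 2) *
          Real.sqrt ((N v q) ^ 2 + α' * (S v q) ^ 2 + β' * (P q) ^ 2) ∧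
      Real.sqrt ((N v q) ^ 2 + α' * (S v q) ^ 2 + β' * (P q) ^ 2) ≤
        Real.sqrt ((N u p) ^ 2 + α' * (S u p) ^ 2 + β' * (P p) ^ 2) / γ := by
  set ε := min (1/2) (min (α / (8 * C₁)) (β / (8 * C₂))) with hεdef
  have hεpos : 0 < ε := by
    apply lt_min (by norm_num) (lt_min (by positivity) (by positivity))
  have hεhalf : ε ≤ 1/2 := min_le_left _ _
  have hεC₁ : C₁ * ε ≤ α / 8 := by
    have h1 : ε ≤ α / (8 * C₁) := le_trans (min_le_right _ _) (min_le_left _ _)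
    rw [le_div_iff₀ (by positivity)] at h1; linarith
  have hεC₂ : C₂ * ε ≤ β / 8 := by
    have h1 : ε ≤ β / (8 * C₂) := le_trans (min_le_right _ _) (min_le_right _ _)
    rw [le_div_iff₀ (by positivity)] at h1; linarith
  set γ := min (min ε 1) (min (min (α / (8 * c₁)) (β / (8 * c₂))) (min (1 / c₁) (1 / c₂)))
    with hγdef
  have hγpos : 0 < γ := by
    apply lt_min (lt_min hεpos one_pos)
    exact lt_min (lt_min (by positivity) (by positivity)) (lt_min (by positivity) (by positivity))
  have hγε : γ ≤ ε := le_trans (min_le_left _ _) (min_le_left _ _)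
  have hγ1 : γ ≤ 1 := le_trans (min_le_left _ _) (min_le_right _ _)
  have hγc₁ : γ * c₁ ≤ α / 8 := by
    have h1 : γ ≤ α / (8 * c₁) :=
      le_trans (min_le_right _ _) (le_trans (min_le_left _ _) (min_le_left _ _))
    rw [le_div_iff₀ (by positivity)] at h1; linarith
  have hγc₂ : γ * c₂ ≤ β / 8 := by
    have h1 : γ ≤ β / (8 * c₂) :=
      le_trans (min_le_right _ _) (le_trans (min_le_left _ _) (min_le_right _ _))
    rw [le_div_iff₀ (by positivity)] at h1; linarith
  have hγc₁' : c₁ * γ ≤ 1 := by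
    have h1 : γ ≤ 1 / c₁ :=
      le_trans (min_le_right _ _) (le_trans (min_le_right _ _) (min_le_left _ _))
    rw [le_div_iff₀ hc₁] at h1; linarith
  have hγc₂' : c₂ * γ ≤ 1 := by
    have h1 : γ ≤ 1 / c₂ :=
      le_trans (min_le_right _ _) (le_trans (min_le_right _ _) (min_le_right _ _))
    rw [le_div_iff₀ hc₂] at h1; linarith
  refine ⟨1, one_pos, 1, one_pos, γ, hγpos, fun u p => ?_⟩
  set X := (N u p) ^ 2 + 1 * (S u p) ^ 2 + 1 * (P p) ^ 2 with hXdef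
  set T := Real.sqrt X with hTdef
  have hX0 : 0 ≤ X := by positivity
  have hT0 : 0 ≤ T := Real.sqrt_nonneg _
  have hT2 : T ^ 2 = X := Real.sq_sqrt hX0
  have hST : S u p ≤ T := by
    rw [hTdef, show S u p = Real.sqrt ((S u p) ^ 2) from (Real.sqrt_sq (hS u p)).symm]
    apply Real.sqrt_le_sqrt
    nlinarith [sq_nonneg (N u p), sq_nonneg (P p)]
  have hPT : P p ≤ T := by
    rw [hTdef, show P p = Real.sqrt ((P p) ^ 2) from (Real.sqrt_sq (hP p)).symm]
    apply Real.sqrt_le_sqrt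
    nlinarith [sq_nonneg (N u p), sq_nonneg (S u p)]
  by_cases hcase : ε * T ^ 2 ≤ (N u p) ^ 2
  · -- Case A: take (v, q) = (u, p)
    refine ⟨u, p, ?_, ?_⟩
    · rw [hcoer u p]
      nlinarith [mul_le_mul_of_nonneg_right hγε (sq_nonneg T)]
    · rw [le_div_iff₀ hγpos]
      nlinarith [mul_le_mul_of_nonneg_left hγ1 hT0]
  · push_neg at hcase
    by_cases hcase2 : P p ≤ S u p
    · -- Case B1: take (v, q) = (z, 0)
      obtain ⟨z, hz1, hz2⟩ := hsupg u p
      have hZ1 : Real.sqrt ((N z 0) ^ 2 + 1 * (S z 0) ^ 2 + 1 * (P (0 : H₂)) ^ 2) ≤ c₁ * T :=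
        calc Real.sqrt ((N z 0) ^ 2 + 1 * (S z 0) ^ 2 + 1 * (P (0 : H₂)) ^ 2) ≤ c₁ * S u p :=
              sqrt_bound _ _ _ _ (hN z 0) (hS z 0) (hP 0) (mul_nonneg hc₁.le (hS u p)) hz2
          _ ≤ c₁ * T := mul_le_mul_of_nonneg_left hST hc₁.le
      have hSsq : (S u p) ^ 2 ≥ T ^ 2 / 4 := by
        nlinarith [sq_nonneg (S u p - P p), hS u p, hP p]
      have hA1 : A (u, p) (z, 0) ≥ (α / 8) * T ^ 2 := by
        nlinarith [mul_le_mul_of_nonneg_left hSsq.le hα.le,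
          mul_le_mul_of_nonneg_right hεC₁ (sq_nonneg T)]
      exact ⟨z, 0, infsup_aux _ T _ c₁ (α / 8) γ hT0 hγpos hZ1 hγc₁ hγc₁' hA1⟩
    · -- Case B2: take (v, q) = (zt, 0)
      push_neg at hcase2
      obtain ⟨zt, hz1, hz2⟩ := hpres u p
      have hZ1 : Real.sqrt ((N zt 0) ^ 2 + 1 * (S zt 0) ^ 2 + 1 * (P (0 : H₂)) ^ 2) ≤ c₂ * T :=
        calc Real.sqrt ((N zt 0) ^ 2 + 1 * (S zt 0) ^ 2 + 1 * (P (0 : H₂)) ^ 2) ≤ c₂ * P p :=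
              sqrt_bound _ _ _ _ (hN zt 0) (hS zt 0) (hP 0) (mul_nonneg hc₂.le (hP p)) hz2
          _ ≤ c₂ * T := mul_le_mul_of_nonneg_left hPT hc₂.le
      have hPsq : (P p) ^ 2 ≥ T ^ 2 / 4 := by
        nlinarith [sq_nonneg (S u p - P p), hS u p, hP p]
      have hA1 : A (u, p) (zt, 0) ≥ (β / 8) * T ^ 2 := by
        nlinarith [mul_le_mul_of_nonneg_left hPsq.le hβ.le,
          mul_le_mul_of_nonneg_right hεC₂ (sq_nonneg T)]
      exact ⟨zt, 0, infsup_aux _ T _ c₂ (β / 8) γ hT0 hγpos hZ1 hγc₂ hγc₂' hA1⟩
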